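/- Every state ρ on H^⊗M that is invariant under all permutations of the M tensor factors admits a purification |Φ⟩ lying in the totally symmetric subspace K⁺_M of K^⊗M, where K = H⊗H: that is, under the natural identification K^⊗M ≅ H^⊗M ⊗ H^⊗M (grouping the first factors of each K together and the second factors together), tracing out the second copy of H^⊗M from |Φ⟩⟨Φ| yields ρ. -/

import Mathlib

open MeasureTheory Matrix Filter
open scoped ComplexOrder

noncomputable section

/-- Index type for the standard basis of `H^{⊗ n}`, where the single-system
basis is indexed by `I`. -/
abbrev Idx (I : Type) (n : ℕ) := Fin n → I

/-- The rank-one projector `(|ψ⟩⟨ψ|)^{⊗ n}` on `H^{⊗ n}`, as a matrix. -/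
def pureTensor (I : Type) (n : ℕ) (ψ : I → ℂ) : Matrix (Idx I n) (Idx I n) ℂ :=
  Matrix.of fun a b => ∏ m, ψ (a m) * (starRingEnd ℂ) (ψ (b m))

/-- `d⁺_n = C(d + n - 1, n)`, the dimension of the totally symmetric subspace of the
`n`-fold tensor power of a `d`-dimensional space. -/
def dPlus (d n : ℕ) : ℕ := Nat.choose (d + n - 1) n

/-- `D⁺_n = C(d² + n - 1, n)`, the dimension of the totally symmetric subspace of the
`n`-fold tensor power of `K = H ⊗ H`, `dim H = d`. -/
def DPlus (d n : ℕ) : ℕ := Nat.choose (d ^ 2 + n - 1) n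

/-- The orthogonal projector onto the totally symmetric subspace of `H^{⊗ n}`:
the average `(1/n!) ∑_π U_π` of the permutation unitaries. -/
def symProj (I : Type) [Fintype I] [DecidableEq I] (n : ℕ) : Matrix (Idx I n) (Idx I n) ℂ :=
  ((Nat.factorial n : ℂ))⁻¹ • ∑ π : Equiv.Perm (Fin n),
    Matrix.of (fun a b : Idx I n => if a = b ∘ π then (1 : ℂ) else 0)

/-- Embedding of the first `k` factor positions into `Fin M`. -/
def embL {M k : ℕ} (h : k ≤ M) (i : Fin k) : Fin M :=
  finCongr (Nat.add_sub_cancel' h) (finSumFinEquiv (Sum.inl i))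

/-- Embedding of the last `M - k` factor positions into `Fin M`. -/
def embR {M k : ℕ} (h : k ≤ M) (j : Fin (M - k)) : Fin M :=
  finCongr (Nat.add_sub_cancel' h) (finSumFinEquiv (Sum.inr j))

/-- Join a multi-index on the first `k` factors with one on the last `M - k` factors. -/
def joinIdx {I : Type} {M k : ℕ} (h : k ≤ M) (a : Idx I k) (c : Idx I (M - k)) : Idx I M :=
  fun i => Sum.elim a c (finSumFinEquiv.symm (finCongr (Nat.add_sub_cancel' h).symm i))

/-- Partial trace over the last `M - k` tensor factors. -/
def ptrace {I : Type} [Fintype I] (M k : ℕ) (h : k ≤ M) (X : Matrix (Idx I M) (Idx I M) ℂ) :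
    Matrix (Idx I k) (Idx I k) ℂ :=
  Matrix.of fun a b => ∑ c : Idx I (M - k), X (joinIdx h a c) (joinIdx h b c)

/-- The operator `1^{⊗ k} ⊗ (|ψ⟩⟨ψ|)^{⊗ (M-k)}` on `H^{⊗ M}`. -/
def idTensorPure {I : Type} [DecidableEq I] {M k : ℕ} (h : k ≤ M) (ψ : I → ℂ) :
    Matrix (Idx I M) (Idx I M) ℂ :=
  Matrix.of fun a b =>
    (if (fun i => a (embL h i)) = (fun i => b (embL h i)) then (1 : ℂ) else 0) *
      ∏ j, ψ (a (embR h j)) * (starRingEnd ℂ) (ψ (b (embR h j)))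

/-- Entrywise (Bochner) integral of a matrix-valued function of a pure state. -/
def matIntegral {A : Type} {J : Type} (μ : Measure (J → ℂ))
    (f : (J → ℂ) → Matrix A A ℂ) : Matrix A A ℂ :=
  Matrix.of fun a b => ∫ ψ, f ψ a b ∂μ

/-- The trace norm `‖X‖₁ = Tr |X| = Tr √(Xᴴ X)`. -/
def traceNorm {A : Type} [Fintype A] [DecidableEq A] (X : Matrix A A ℂ) : ℝ :=
  ((Matrix.posSemidef_conjTranspose_mul_self X).1.eigenvectorUnitary.1 *
    Matrix.diagonal (((↑) : ℝ → ℂ) ∘ (Real.sqrt ·) ∘ (Matrix.posSemidef_conjTranspose_mul_self X).1.eigenvalues) *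
    (star (Matrix.posSemidef_conjTranspose_mul_self X).1.eigenvectorUnitary : Matrix A A ℂ)).trace.re

/-- A quantum state: a positive semidefinite matrix of unit trace. -/
def IsState {A : Type} [Fintype A] (ρ : Matrix A A ℂ) : Prop :=
  ρ.PosSemidef ∧ ρ.trace = 1

/-- `μ` is the unitarily invariant (Haar) probability measure on the pure states of
the Hilbert space with orthonormal basis indexed by `I`: a probability measure carried
by the unit sphere and invariant under every unitary. -/
def IsHaarPure (I : Type) [Fintype I] [DecidableEq I] (μ : Measure (I → ℂ)) : Prop :=
  IsProbabilityMeasure μ ∧ (∀ᵐ ψ ∂μ, ∑ i, Complex.normSq (ψ i) = 1) ∧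
    ∀ U : Matrix.unitaryGroup I ℂ, μ.map (Matrix.mulVec (U : Matrix I I ℂ)) = μ

/-- The extension `id_m ⊗ E` of a linear map on matrices. -/
def extendMap {A B : Type} [Fintype A] [DecidableEq A] (m : ℕ)
    (E : Matrix A A ℂ →ₗ[ℂ] Matrix B B ℂ)
    (X : Matrix (Fin m × A) (Fin m × A) ℂ) : Matrix (Fin m × B) (Fin m × B) ℂ :=
  Matrix.of fun p q => E (Matrix.of fun a b => X (p.1, a) (q.1, b)) p.2 q.2

/-- Complete positivity: every extension `id_m ⊗ E` maps positive semidefinite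
matrices to positive semidefinite matrices. -/
def IsCP {A B : Type} [Fintype A] [DecidableEq A] [Fintype B] [DecidableEq B]
    (E : Matrix A A ℂ →ₗ[ℂ] Matrix B B ℂ) : Prop :=
  ∀ (m : ℕ) (X : Matrix (Fin m × A) (Fin m × A) ℂ), X.PosSemidef → (extendMap m E X).PosSemidef

/-- Trace preservation. -/
def IsTP {A B : Type} [Fintype A] [Fintype B]
    (E : Matrix A A ℂ →ₗ[ℂ] Matrix B B ℂ) : Prop :=
  ∀ X : Matrix A A ℂ, (E X).trace = X.trace

/-- `F` is the adjoint (Heisenberg picture) of `E`: `Tr[E(ρ) O] = Tr[ρ F(O)]`. -/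
def IsAdjointPair' {A B : Type} [Fintype A] [Fintype B]
    (E : Matrix A A ℂ →ₗ[ℂ] Matrix B B ℂ) (F : Matrix B B ℂ →ₗ[ℂ] Matrix A A ℂ) : Prop :=
  ∀ (ρ : Matrix A A ℂ) (O : Matrix B B ℂ), (E ρ * O).trace = (ρ * F O).trace

/-- Partial trace of a pure state of `K = H ⊗ H` over the second factor of `H`. -/
def redK (d : ℕ) (Ψ : Fin d × Fin d → ℂ) : Matrix (Fin d) (Fin d) ℂ :=
  Matrix.of fun a b => ∑ c, Ψ (a, c) * (starRingEnd ℂ) (Ψ (b, c))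

/-- The `n`-fold tensor power `σ^{⊗ n}` of a single-system operator. -/
def tensorPow (d n : ℕ) (σ : Matrix (Fin d) (Fin d) ℂ) :
    Matrix (Idx (Fin d) n) (Idx (Fin d) n) ℂ :=
  Matrix.of fun a b => ∏ i, σ (a i) (b i)

open scoped MatrixOrder

/-- every permutationally invariant state `ρ` on `H^{⊗M}` admits a
purification `|Φ⟩` in the totally symmetric subspace `K⁺_M` of `K^{⊗M}`, `K = H ⊗ H`:
under the identification `K^{⊗M} ≅ H^{⊗M} ⊗ H^{⊗M}`, tracing out the second copy of
`H^{⊗M}` from `|Φ⟩⟨Φ|` yields `ρ`. -/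
theorem stmt10 (d M : ℕ) (hd : 1 ≤ d)
    (ρ : Matrix (Idx (Fin d) M) (Idx (Fin d) M) ℂ) (hρ : IsState ρ)
    (hperm : ∀ π : Equiv.Perm (Fin M), ρ.submatrix (· ∘ π) (· ∘ π) = ρ) :
    ∃ Φ : (Fin M → Fin d × Fin d) → ℂ,
      (∑ x, Complex.normSq (Φ x) = 1) ∧
      (∀ (π : Equiv.Perm (Fin M)) (x : Fin M → Fin d × Fin d), Φ (x ∘ π) = Φ x) ∧
      (∀ a b : Idx (Fin d) M, ρ a b = ∑ c : Idx (Fin d) M,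
        Φ (fun i => (a i, c i)) * (starRingEnd ℂ) (Φ (fun i => (b i, c i)))) := by
  
  obtain ⟨hpsd, htr⟩ := hρ
  set S := CFC.sqrt ρ with hS
  have hSpsd : S.PosSemidef := Matrix.nonneg_iff_posSemidef.mp (CFC.sqrt_nonneg ρ)
  have hSmul : S * S = ρ := CFC.sqrt_mul_sqrt_self ρ (Matrix.nonneg_iff_posSemidef.mpr hpsd)
  -- permutation invariance of S
  have hSperm : ∀ π : Equiv.Perm (Fin M), S.submatrix (· ∘ π) (· ∘ π) = S := by
    intro π
    let e : Idx (Fin d) M ≃ Idx (Fin d) M :=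
      ⟨fun a => a ∘ π, fun a => a ∘ π.symm,
        fun a => funext fun i => by simp, fun a => funext fun i => by simp⟩
    have hsub : ∀ X : Matrix (Idx (Fin d) M) (Idx (Fin d) M) ℂ,
        X.submatrix (· ∘ π) (· ∘ π) = X.submatrix e e := by
      intro X; rfl
    have hT : (S.submatrix e e).PosSemidef := hSpsd.submatrix e
    have hT2 : (S.submatrix e e) ^ 2 = ρ := by
      rw [pow_two, Matrix.submatrix_mul_equiv, hSmul, ← hsub, hperm]
    have := ((CFC.sqrt_eq_iff ρ _ (Matrix.nonneg_iff_posSemidef.mpr hpsd)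
        (Matrix.nonneg_iff_posSemidef.mpr hT)).mpr (by rw [← pow_two]; exact hT2)).symm
    rw [hsub]; rw [this, hS]
  refine ⟨fun x => S (fun i => (x i).1) (fun i => (x i).2), ?_, ?_, ?_⟩
  · -- normalization
    have key : (∑ x : Fin M → Fin d × Fin d, (Complex.normSq
        (S (fun i => (x i).1) (fun i => (x i).2)) : ℂ)) = 1 := by
      calc (∑ x : Fin M → Fin d × Fin d, (Complex.normSq
            (S (fun i => (x i).1) (fun i => (x i).2)) : ℂ))
          = ∑ p : Idx (Fin d) M × Idx (Fin d) M, (Complex.normSq (S p.1 p.2) : ℂ) := by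
            apply Fintype.sum_equiv (Equiv.arrowProdEquivProdArrow (Fin M) (fun _ => Fin d) (fun _ => Fin d))
            intro x; rfl
        _ = ∑ a : Idx (Fin d) M, ∑ c : Idx (Fin d) M, S a c * (starRingEnd ℂ) (S a c) := by
            rw [Fintype.sum_prod_type]
            congr 1; ext a; congr 1; ext c
            rw [Complex.mul_conj]
        _ = (S * Sᴴ).trace := by
            simp [Matrix.trace, Matrix.mul_apply, Matrix.conjTranspose_apply, Matrix.diag]
        _ = 1 := by rw [hSpsd.isHermitian, hSmul, htr]
    have := key
    push_cast at this
    exact_mod_cast key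
  · intro π x
    exact congrFun (congrFun (hSperm π) (fun i => (x i).1)) (fun i => (x i).2)
  · intro a b
    have : ρ a b = (S * Sᴴ) a b := by rw [hSpsd.isHermitian, hSmul]
    rw [this, Matrix.mul_apply]
    exact Finset.sum_congr rfl fun c _ => by simp [Matrix.conjTranspose_apply]
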